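/- Let G be an abelian group and let R, R', S, S' be quasi-endomorphisms of G with R ≡ R' and S ≡ S'. Then R + S ≡ R' + S' and S ∘ R ≡ S' ∘ R'. -/

import Mathlib

/-!
Equivalence splits into two one-sided comparisons, "`R ≤ R'` on a subgroup of finite index up to
a finite error", and each of them is compatible with sum and composition. For sums this is
immediate. For `S ∘ R` the middle point is first moved, using that `dom R` has finite index, into a
subgroup `D` of finite index on which `S` and `S'` are defined and comparable; since cokernels are
finite, moving a middle point only changes the value by an element of the finite group of
`S`-images of a finite subgroup.
-/

namespace QH

variable {G H K : Type*} [AddCommGroup G] [AddCommGroup H] [AddCommGroup K]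

def dom (R : AddSubgroup (G × H)) : AddSubgroup G := R.map (AddMonoidHom.fst G H)

def img (R : AddSubgroup (G × H)) : AddSubgroup H := R.map (AddMonoidHom.snd G H)

def ker (R : AddSubgroup (G × H)) : AddSubgroup G := R.comap (AddMonoidHom.inl G H)

def coker (R : AddSubgroup (G × H)) : AddSubgroup H := R.comap (AddMonoidHom.inr G H)

/-- The sum of two additive relations: `R + R' = {(a, b+b') : (a,b) ∈ R, (a,b') ∈ R'}`. -/
def relAdd (R R' : AddSubgroup (G × H)) : AddSubgroup (G × H) where
  carrier := {p | ∃ b b', (p.1, b) ∈ R ∧ (p.1, b') ∈ R' ∧ p.2 = b + b'}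
  zero_mem' := ⟨0, 0, R.zero_mem, R'.zero_mem, by simp⟩
  add_mem' := by
    rintro ⟨a, c⟩ ⟨a', c'⟩ ⟨b, b', hb, hb', rfl⟩ ⟨d, d', hd, hd', rfl⟩
    exact ⟨b + d, b' + d', R.add_mem hb hd, R'.add_mem hb' hd', by simp only [Prod.snd_add]; abel⟩
  neg_mem' := by
    rintro ⟨a, c⟩ ⟨b, b', hb, hb', rfl⟩
    exact ⟨-b, -b', R.neg_mem hb, R'.neg_mem hb', by simp only [Prod.snd_neg]; abel⟩

/-- The composition of additive relations. -/
def relComp (S : AddSubgroup (H × K)) (R : AddSubgroup (G × H)) : AddSubgroup (G × K) where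
  carrier := {p | ∃ b, (p.1, b) ∈ R ∧ (b, p.2) ∈ S}
  zero_mem' := ⟨0, R.zero_mem, S.zero_mem⟩
  add_mem' := by
    rintro ⟨a, c⟩ ⟨a', c'⟩ ⟨b, hb, hb'⟩ ⟨d, hd, hd'⟩
    exact ⟨b + d, R.add_mem hb hd, S.add_mem hb' hd'⟩
  neg_mem' := by
    rintro ⟨a, c⟩ ⟨b, hb, hb'⟩
    exact ⟨-b, R.neg_mem hb, S.neg_mem hb'⟩

/-- The inverse of an additive relation: `R⁻¹ = {(h,g) : (g,h) ∈ R}`. -/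
def relInv (R : AddSubgroup (G × H)) : AddSubgroup (H × G) :=
  R.map ((AddMonoidHom.snd G H).prod (AddMonoidHom.fst G H))

/-- The diagonal relation `id_D = {(d,d) : d ∈ D}` of a subgroup `D ≤ A`. -/
def relId {A : Type*} [AddCommGroup A] (D : AddSubgroup A) : AddSubgroup (A × A) :=
  D.map ((AddMonoidHom.id A).prod (AddMonoidHom.id A))


def IsQuasiHom (R : AddSubgroup (G × H)) : Prop :=
  (dom R).FiniteIndex ∧ ((coker R : Set H)).Finite

/-- Two additive relations `R, R' ≤ G × H` are equivalent if there are a finite-index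
subgroup `G₁ ≤ G` and a finite subgroup `F ≤ H` with
`(R ∩ (G₁ × H)) + (G₁ × F) = (R' ∩ (G₁ × H)) + (G₁ × F)`. -/
def relEquiv (R R' : AddSubgroup (G × H)) : Prop :=
  ∃ (G₁ : AddSubgroup G) (F : AddSubgroup H), G₁.FiniteIndex ∧ ((F : Set H)).Finite ∧
    relAdd (R ⊓ G₁.prod ⊤) (G₁.prod F) = relAdd (R' ⊓ G₁.prod ⊤) (G₁.prod F)

lemma mem_dom {R : AddSubgroup (G × H)} {a : G} : a ∈ dom R ↔ ∃ b, (a, b) ∈ R :=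
  ⟨fun ⟨p, hp, hpa⟩ => ⟨p.2, hpa ▸ hp⟩, fun ⟨b, hb⟩ => ⟨(a, b), hb, rfl⟩⟩

lemma mem_img {R : AddSubgroup (G × H)} {b : H} : b ∈ img R ↔ ∃ a, (a, b) ∈ R :=
  ⟨fun ⟨p, hp, hpb⟩ => ⟨p.1, hpb ▸ hp⟩, fun ⟨a, ha⟩ => ⟨(a, b), ha, rfl⟩⟩

lemma sub_mem_coker {R : AddSubgroup (G × H)} {a : G} {b b' : H} (h : (a, b) ∈ R)
    (h' : (a, b') ∈ R) : b - b' ∈ coker R :=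
  show ((0 : G), b - b') ∈ R by simpa using R.sub_mem h h'

lemma sub_mem_img_inf_prod {S : AddSubgroup (G × H)} {E : AddSubgroup G} {a a' : G} {b b' : H}
    (h : (a, b) ∈ S) (h' : (a', b') ∈ S) (ha : a - a' ∈ E) : b - b' ∈ img (S ⊓ E.prod ⊤) :=
  mem_img.2 ⟨a - a', S.sub_mem h h', ha, trivial⟩

open Pointwise in
lemma finite_sup {F F' : AddSubgroup H} (hF : (F : Set H).Finite) (hF' : (F' : Set H).Finite) :
    ((F ⊔ F' : AddSubgroup H) : Set H).Finite := by
  rw [AddSubgroup.add_normal]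
  exact hF.add hF'

lemma finite_fiber {S : AddSubgroup (G × H)} (hS : (coker S : Set H).Finite) (a : G) :
    {b : H | (a, b) ∈ S}.Finite := by
  rcases Set.eq_empty_or_nonempty {b : H | (a, b) ∈ S} with h | ⟨b₀, hb₀⟩
  · simp [h]
  · refine (hS.image (b₀ + ·)).subset fun b hb => ⟨b - b₀, sub_mem_coker hb hb₀, ?_⟩
    simp

lemma finite_img_inf_prod {S : AddSubgroup (G × H)} (hS : (coker S : Set H).Finite)
    {E : AddSubgroup G} (hE : (E : Set G).Finite) : (img (S ⊓ E.prod ⊤) : Set H).Finite := by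
  refine (hE.biUnion fun a _ => finite_fiber hS a).subset fun b hb => ?_
  obtain ⟨a, haS, haE, -⟩ := mem_img.1 hb
  exact Set.mem_biUnion haE haS

/- `dom (R ⊓ G × D)` is the image under `(a, b) ↦ a` of the kernel of `R → H ⧸ D`,
`(a, b) ↦ b + D`, a subgroup of finite index of `R`. -/
lemma finiteIndex_dom_inf_prod {R : AddSubgroup (G × H)} (hR : (dom R).FiniteIndex)
    {D : AddSubgroup H} (hD : D.FiniteIndex) :
    (dom (R ⊓ (⊤ : AddSubgroup G).prod D)).FiniteIndex := by
  let π : R →+ G := (AddMonoidHom.fst G H).comp R.subtype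
  let q : R →+ H ⧸ D := (QuotientAddGroup.mk' D).comp ((AddMonoidHom.snd G H).comp R.subtype)
  have hrange : π.range = dom R := by
    rw [AddMonoidHom.range_comp, AddSubgroup.range_subtype]; rfl
  have hmap : q.ker.map π = dom (R ⊓ (⊤ : AddSubgroup G).prod D) := by
    ext a
    simp [π, q, mem_dom, QuotientAddGroup.eq_zero_iff, AddSubgroup.mem_prod, and_comm]
  rw [AddSubgroup.finiteIndex_iff, ← hmap, AddSubgroup.index_map, hrange]
  exact mul_ne_zero (ne_zero_of_dvd_ne_zero q.ker.index_ne_zero_of_finite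
    (AddSubgroup.index_dvd_of_le le_sup_left)) (dom R).index_ne_zero_of_finite

def RelLEOn (G₁ : AddSubgroup G) (F : AddSubgroup H) (R R' : AddSubgroup (G × H)) : Prop :=
  ∀ a ∈ G₁, ∀ b, (a, b) ∈ R → ∃ b', (a, b') ∈ R' ∧ b - b' ∈ F

def AlmostLE (R R' : AddSubgroup (G × H)) : Prop :=
  ∃ (G₁ : AddSubgroup G) (F : AddSubgroup H), G₁.FiniteIndex ∧ (F : Set H).Finite ∧
    RelLEOn G₁ F R R'

section RelLEOn

variable {G₁ G₂ : AddSubgroup G} {F₁ F₂ : AddSubgroup H}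

lemma RelLEOn.mono {R R' : AddSubgroup (G × H)} (h : RelLEOn G₁ F₁ R R') (hG : G₂ ≤ G₁)
    (hF : F₁ ≤ F₂) : RelLEOn G₂ F₂ R R' := fun a ha b hb =>
  (h a (hG ha) b hb).imp fun _ hb' => ⟨hb'.1, hF hb'.2⟩

lemma mem_relAdd_inf_prod {R : AddSubgroup (G × H)} {a : G} {x : H} :
    (a, x) ∈ relAdd (R ⊓ G₁.prod ⊤) (G₁.prod F₁) ↔ a ∈ G₁ ∧ ∃ b, (a, b) ∈ R ∧ x - b ∈ F₁ := by
  constructor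
  · rintro ⟨b, b', ⟨hb, -⟩, ⟨ha, hb'⟩, rfl⟩
    exact ⟨ha, b, hb, by simpa using hb'⟩
  · rintro ⟨ha, b, hb, hxb⟩
    exact ⟨b, x - b, ⟨hb, ha, trivial⟩, ⟨ha, hxb⟩, (add_sub_cancel b x).symm⟩

lemma relAdd_inf_prod_le_iff {R R' : AddSubgroup (G × H)} :
    relAdd (R ⊓ G₁.prod ⊤) (G₁.prod F₁) ≤ relAdd (R' ⊓ G₁.prod ⊤) (G₁.prod F₁) ↔
      RelLEOn G₁ F₁ R R' := by
  constructor
  · intro h a ha b hb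
    obtain ⟨-, b', hb', hbb'⟩ :=
      mem_relAdd_inf_prod.1 (h ((mem_relAdd_inf_prod (x := b)).2 ⟨ha, b, hb, by simp⟩))
    exact ⟨b', hb', hbb'⟩
  · rintro h ⟨a, x⟩ hx
    obtain ⟨ha, b, hb, hxb⟩ := mem_relAdd_inf_prod.1 hx
    obtain ⟨b', hb', hbb'⟩ := h a ha b hb
    exact mem_relAdd_inf_prod.2 ⟨ha, b', hb', sub_add_sub_cancel x b b' ▸ add_mem hxb hbb'⟩

lemma relEquiv_iff_almostLE {R R' : AddSubgroup (G × H)} :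
    relEquiv R R' ↔ AlmostLE R R' ∧ AlmostLE R' R := by
  simp only [relEquiv, le_antisymm_iff, relAdd_inf_prod_le_iff]
  constructor
  · rintro ⟨G₁, F, hG₁, hF, h, h'⟩
    exact ⟨⟨G₁, F, hG₁, hF, h⟩, ⟨G₁, F, hG₁, hF, h'⟩⟩
  · rintro ⟨⟨G₁, F₁, hG₁, hF₁, h₁⟩, ⟨G₂, F₂, hG₂, hF₂, h₂⟩⟩
    exact ⟨G₁ ⊓ G₂, F₁ ⊔ F₂, inferInstance, finite_sup hF₁ hF₂,
      h₁.mono inf_le_left le_sup_left, h₂.mono inf_le_right le_sup_right⟩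

lemma RelLEOn.relAdd {R R' S S' : AddSubgroup (G × H)} (hR : RelLEOn G₁ F₁ R R')
    (hS : RelLEOn G₂ F₂ S S') : RelLEOn (G₁ ⊓ G₂) (F₁ ⊔ F₂) (relAdd R S) (relAdd R' S') := by
  rintro a ⟨ha₁, ha₂⟩ _ ⟨b, c, hb, hc, rfl⟩
  obtain ⟨b', hb', hbb'⟩ := hR a ha₁ b hb
  obtain ⟨c', hc', hcc'⟩ := hS a ha₂ c hc
  refine ⟨b' + c', ⟨b', c', hb', hc', rfl⟩, ?_⟩
  rw [add_sub_add_comm]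
  exact add_mem (AddSubgroup.mem_sup_left hbb') (AddSubgroup.mem_sup_right hcc')

lemma RelLEOn.relComp {R R' : AddSubgroup (G × H)} {S S' : AddSubgroup (H × K)}
    {H₁ D E : AddSubgroup H} {F₂ : AddSubgroup K} (hR : RelLEOn G₁ F₁ R R')
    (hS : RelLEOn H₁ F₂ S S') (hD : D ≤ H₁ ⊓ dom S ⊓ dom S') (hE : F₁ ⊔ coker R ⊔ coker R' ≤ E) :
    RelLEOn (G₁ ⊓ dom (R ⊓ (⊤ : AddSubgroup G).prod D) ⊓ dom (R' ⊓ (⊤ : AddSubgroup G).prod D))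
      (F₂ ⊔ img (S ⊓ E.prod ⊤) ⊔ img (S' ⊓ E.prod ⊤)) (relComp S R) (relComp S' R') := by
  rintro a ⟨⟨ha, haR⟩, haR'⟩ c ⟨b, hab, hbc⟩
  obtain ⟨b₀, hab₀, -, hb₀⟩ := mem_dom.1 haR
  obtain ⟨b₀', hab₀', -, hb₀'⟩ := mem_dom.1 haR'
  obtain ⟨⟨hb₀H₁, hb₀S⟩, -⟩ := hD hb₀
  obtain ⟨c₀, hbc₀⟩ := mem_dom.1 hb₀S
  obtain ⟨c₀', hbc₀', hc₀⟩ := hS b₀ hb₀H₁ c₀ hbc₀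
  obtain ⟨c₁', hbc₁'⟩ := mem_dom.1 (hD hb₀').2
  obtain ⟨b₁', hab₁', hb₁'⟩ := hR a ha b₀ hab₀
  have hc : c - c₀ ∈ img (S ⊓ E.prod ⊤) := sub_mem_img_inf_prod hbc hbc₀
    (hE (AddSubgroup.mem_sup_left (AddSubgroup.mem_sup_right (sub_mem_coker hab hab₀))))
  have hc₀' : c₀' - c₁' ∈ img (S' ⊓ E.prod ⊤) := sub_mem_img_inf_prod hbc₀' hbc₁' <| hE <|
    sub_add_sub_cancel b₀ b₁' b₀' ▸ add_mem
      (AddSubgroup.mem_sup_left (AddSubgroup.mem_sup_left hb₁'))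
      (AddSubgroup.mem_sup_right (sub_mem_coker hab₁' hab₀'))
  refine ⟨c₁', ⟨b₀', hab₀', hbc₁'⟩, ?_⟩
  rw [← sub_add_sub_cancel c c₀ c₁', ← sub_add_sub_cancel c₀ c₀' c₁']
  exact add_mem (AddSubgroup.mem_sup_left (AddSubgroup.mem_sup_right hc))
    (add_mem (AddSubgroup.mem_sup_left (AddSubgroup.mem_sup_left hc₀))
      (AddSubgroup.mem_sup_right hc₀'))

end RelLEOn

lemma AlmostLE.relAdd {R R' S S' : AddSubgroup (G × H)} (hR : AlmostLE R R')
    (hS : AlmostLE S S') : AlmostLE (relAdd R S) (relAdd R' S') := by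
  obtain ⟨G₁, F₁, hG₁, hF₁, hR⟩ := hR
  obtain ⟨G₂, F₂, hG₂, hF₂, hS⟩ := hS
  exact ⟨G₁ ⊓ G₂, F₁ ⊔ F₂, inferInstance, finite_sup hF₁ hF₂, hR.relAdd hS⟩

lemma AlmostLE.relComp {R R' : AddSubgroup (G × H)} {S S' : AddSubgroup (H × K)}
    (hRR' : AlmostLE R R') (hSS' : AlmostLE S S') (hR : IsQuasiHom R) (hR' : IsQuasiHom R')
    (hS : IsQuasiHom S) (hS' : IsQuasiHom S') : AlmostLE (relComp S R) (relComp S' R') := by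
  obtain ⟨G₁, F₁, hG₁, hF₁, hRR'⟩ := hRR'
  obtain ⟨H₁, F₂, hH₁, hF₂, hSS'⟩ := hSS'
  have hD : (H₁ ⊓ dom S ⊓ dom S').FiniteIndex := by
    have := hS.1; have := hS'.1; infer_instance
  have := finiteIndex_dom_inf_prod hR.1 hD
  have := finiteIndex_dom_inf_prod hR'.1 hD
  have hE : ((F₁ ⊔ coker R ⊔ coker R' : AddSubgroup H) : Set H).Finite :=
    finite_sup (finite_sup hF₁ hR.2) hR'.2
  exact ⟨_, _, inferInstance,
    finite_sup (finite_sup hF₂ (finite_img_inf_prod hS.2 hE)) (finite_img_inf_prod hS'.2 hE),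
    hRR'.relComp hSS' le_rfl le_rfl⟩

/-- equivalence of quasi-endomorphisms is a congruence for sum and
composition. -/
theorem relEquiv_congr (G : Type*) [AddCommGroup G] (R R' S S' : AddSubgroup (G × G))
    (hR : IsQuasiHom R) (hR' : IsQuasiHom R') (hS : IsQuasiHom S) (hS' : IsQuasiHom S')
    (h1 : relEquiv R R') (h2 : relEquiv S S') :
    relEquiv (relAdd R S) (relAdd R' S') ∧ relEquiv (relComp S R) (relComp S' R') := by
  rw [relEquiv_iff_almostLE] at h1 h2
  exact ⟨relEquiv_iff_almostLE.2 ⟨h1.1.relAdd h2.1, h1.2.relAdd h2.2⟩,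
    relEquiv_iff_almostLE.2 ⟨h1.1.relComp h2.1 hR hR' hS hS', h1.2.relComp h2.2 hR' hR hS' hS⟩⟩

end QH
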